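/- Fix t > 0, y > 0, y' > 0 and x' ∈ ℝ, and for x ∈ ℝ let r(x) := arcosh(((x - x')^2 + y^2 + (y')^2)/(2·y·y')). Then for every x ≠ x', the function x ↦ p_2(t, r(x)) is differentiable at x with derivative ((x - x')/(y·y')) · (-e^{t}·2π·p_4(t, r(x))). -/

import Mathlib

open Real MeasureTheory

/-- The Gruet kernel `p_n(t,r)` for the heat semigroup on hyperbolic space `ℍ^n`. -/
noncomputable def gruet (n : ℕ) (t r : ℝ) : ℝ :=
  Real.exp (-((n : ℝ) - 1) ^ 2 * t / 8) / (π * (2 * π) ^ ((n : ℝ) / 2) * Real.sqrt t) *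
    Real.Gamma (((n : ℝ) + 1) / 2) *
    ∫ b in Set.Ioi (0 : ℝ),
      Real.exp ((π ^ 2 - b ^ 2) / (2 * t)) * Real.sinh b * Real.sin (π * b / t) /
        (Real.cosh b + Real.cosh r) ^ (((n : ℝ) + 1) / 2)

/-- The inverse hyperbolic cosine on `[1, ∞)`. -/
noncomputable def arcosh (x : ℝ) : ℝ := Real.log (x + Real.sqrt (x ^ 2 - 1))

/-!
In the variable `s = cosh r` the kernel `p_n(t, r)` is a constant multiple of
`I_α(s) = ∫₀^∞ w_t(b) (cosh b + s)^(-α)` with `α = (n+1)/2`. The Gaussian factor of `w_t`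
beats `sinh b`, so one may differentiate under the integral sign: `I_α' = -α I_{α+1}`.
Comparing the constants in front of `p_n` and `p_{n+2}` (with `Γ(α+1) = α Γ(α)`) gives
`d/ds p_n(t, arcosh s) = -e^{nt/2} 2π p_{n+2}(t, arcosh s)` for `s > 1`. The theorem is the
case `n = 2` composed with `x ↦ ((x-x')² + y² + y'²)/(2yy')`, which exceeds `1` when `x ≠ x'`.
-/

open Set Filter

noncomputable def gruetWeight (t b : ℝ) : ℝ :=
  exp ((π ^ 2 - b ^ 2) / (2 * t)) * sinh b * sin (π * b / t)

noncomputable def gruetIntegral (t α s : ℝ) : ℝ :=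
  ∫ b in Ioi (0 : ℝ), gruetWeight t b * (cosh b + s) ^ (-α)

lemma integrable_exp_neg_sq_div_add {t : ℝ} (ht : 0 < t) :
    Integrable (fun b : ℝ => exp (-b ^ 2 / (2 * t) + b)) := by
  have h := ((integrable_exp_neg_mul_sq (b := 1 / (2 * t)) (by positivity)).comp_sub_right
    t).const_mul (exp (t / 2))
  refine h.congr (ae_of_all _ fun b => ?_)
  dsimp only
  rw [← exp_add]
  congr 1
  field_simp
  ring

lemma abs_gruetWeight_le {t b : ℝ} (hb : 0 ≤ b) :
    |gruetWeight t b| ≤ exp (π ^ 2 / (2 * t)) * exp (-b ^ 2 / (2 * t) + b) := by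
  have hsinh : |sinh b| ≤ exp b := by
    rw [abs_of_nonneg (sinh_nonneg_iff.2 hb), sinh_eq]
    linarith [exp_pos (-b), exp_pos b]
  calc |gruetWeight t b|
      ≤ exp ((π ^ 2 - b ^ 2) / (2 * t)) * exp b * 1 := by
        rw [gruetWeight, abs_mul, abs_mul, abs_exp]
        gcongr
        exact abs_sin_le_one _
    _ = exp (π ^ 2 / (2 * t)) * exp (-b ^ 2 / (2 * t) + b) := by
        rw [mul_one, ← exp_add, ← exp_add]
        ring_nf

lemma integrableOn_gruetWeight {t : ℝ} (ht : 0 < t) : IntegrableOn (gruetWeight t) (Ioi 0) := by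
  refine Integrable.mono'
    ((integrable_exp_neg_sq_div_add ht).const_mul (exp (π ^ 2 / (2 * t)))).integrableOn
    (by unfold gruetWeight; fun_prop) ?_
  rw [ae_restrict_iff' measurableSet_Ioi]
  exact ae_of_all _ fun b hb => abs_gruetWeight_le (le_of_lt hb)

lemma hasDerivAt_gruetIntegral {t α s₀ : ℝ} (ht : 0 < t) (hα : 0 ≤ α) (hs₀ : -1 < s₀) :
    HasDerivAt (gruetIntegral t α) (-α * gruetIntegral t (α + 1) s₀) s₀ := by
  set δ := (1 + s₀) / 2 with hδ_def
  have hδ : 0 < δ := by linarith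
  have hδ_le : ∀ s ∈ Metric.ball s₀ δ, ∀ b, δ ≤ cosh b + s := fun s hs b => by
    rw [Metric.mem_ball, dist_comm, Real.dist_eq, abs_lt] at hs
    linarith [one_le_cosh b]
  have hdom : ∀ s ∈ Metric.ball s₀ δ, ∀ β : ℝ, β ≤ 0 → ∀ b,
      ‖gruetWeight t b * (cosh b + s) ^ β‖ ≤ δ ^ β * ‖gruetWeight t b‖ :=
    fun s hs β hβ b => by
      have hpos : 0 < cosh b + s := hδ.trans_le (hδ_le s hs b)
      rw [norm_mul, norm_of_nonneg (rpow_nonneg hpos.le _), mul_comm]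
      exact mul_le_mul_of_nonneg_right (rpow_le_rpow_of_nonpos hδ (hδ_le s hs b) hβ)
        (norm_nonneg _)
  have hw := (integrableOn_gruetWeight ht).norm
  have hmeas : ∀ s β : ℝ, AEStronglyMeasurable (fun b => gruetWeight t b * (cosh b + s) ^ β)
      (volume.restrict (Ioi 0)) := fun s β => by
    unfold gruetWeight; fun_prop
  have hderiv : ∀ b, ∀ s ∈ Metric.ball s₀ δ,
      HasDerivAt (fun s => gruetWeight t b * (cosh b + s) ^ (-α))
        (-α * (gruetWeight t b * (cosh b + s) ^ (-(α + 1)))) s := fun b s hs => by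
    have hpos : 0 < cosh b + s := hδ.trans_le (hδ_le s hs b)
    refine ((((hasDerivAt_id s).const_add (cosh b)).rpow_const (p := -α)
      (Or.inl hpos.ne')).const_mul (gruetWeight t b)).congr_deriv ?_
    rw [id, show -α - 1 = -(α + 1) by ring]
    ring
  refine (hasDerivAt_integral_of_dominated_loc_of_deriv_le
    (F := fun s b => gruetWeight t b * (cosh b + s) ^ (-α))
    (F' := fun s b => -α * (gruetWeight t b * (cosh b + s) ^ (-(α + 1))))
    (Metric.ball_mem_nhds s₀ hδ) (Eventually.of_forall fun s => hmeas s _) ?_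
    ((hmeas s₀ _).const_mul _) ?_ (hw.const_mul (α * δ ^ (-(α + 1))))
    (ae_of_all _ fun b s hs => hderiv b s hs)).2.congr_deriv ?_
  · exact hw.const_mul (δ ^ (-α)) |>.mono' (hmeas s₀ _)
      (ae_of_all _ fun b => hdom s₀ (Metric.mem_ball_self hδ) _ (by linarith) b)
  · refine ae_of_all _ fun b s hs => ?_
    rw [norm_mul, norm_neg, norm_of_nonneg hα, mul_assoc]
    gcongr
    exact hdom s hs _ (by linarith) b
  · exact integral_const_mul _ _

noncomputable def gruetConst (n : ℕ) (t : ℝ) : ℝ :=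
  exp (-((n : ℝ) - 1) ^ 2 * t / 8) / (π * (2 * π) ^ ((n : ℝ) / 2) * √t) *
    Gamma (((n : ℝ) + 1) / 2)

lemma gruet_arcosh (n : ℕ) (t : ℝ) {s : ℝ} (hs : 1 ≤ s) :
    gruet n t (_root_.arcosh s) = gruetConst n t * gruetIntegral t (((n : ℝ) + 1) / 2) s := by
  rw [gruet, show _root_.arcosh s = Real.arcosh s from rfl, cosh_arcosh hs, gruetIntegral]
  congr 1
  refine integral_congr_ae (ae_of_all _ fun b => ?_)
  have hpos : 0 ≤ cosh b + s := by linarith [one_le_cosh b]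
  simp only [gruetWeight, rpow_neg hpos, div_eq_mul_inv]

lemma gruetConst_mul_eq_gruetConst_add_two {t : ℝ} (ht : 0 < t) (n : ℕ) :
    gruetConst n t * (((n : ℝ) + 1) / 2) = exp (n * t / 2) * (2 * π) * gruetConst (n + 2) t := by
  have hα : ((n + 2 : ℕ) + 1 : ℝ) / 2 = ((n : ℝ) + 1) / 2 + 1 := by push_cast; ring
  have hexp : exp (-((n + 2 : ℕ) - 1 : ℝ) ^ 2 * t / 8) * exp (n * t / 2) =
      exp (-((n : ℝ) - 1) ^ 2 * t / 8) := by
    rw [← exp_add]; push_cast; ring_nf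
  have hpow : (2 * π) ^ ((n + 2 : ℕ) / 2 : ℝ) = (2 * π) ^ ((n : ℝ) / 2) * (2 * π) := by
    rw [show ((n + 2 : ℕ) / 2 : ℝ) = (n : ℝ) / 2 + 1 by push_cast; ring,
      rpow_add_one (by positivity)]
  have hsqrt : √t ≠ 0 := (sqrt_pos.2 ht).ne'
  rw [gruetConst, gruetConst, hα, Gamma_add_one (by positivity), hpow, ← hexp]
  field_simp

theorem hasDerivAt_gruet_arcosh (n : ℕ) {t s : ℝ} (ht : 0 < t) (hs : 1 < s) :
    HasDerivAt (fun s => gruet n t (_root_.arcosh s))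
      (-exp (n * t / 2) * (2 * π) * gruet (n + 2) t (_root_.arcosh s)) s := by
  have hI := (hasDerivAt_gruetIntegral (α := ((n : ℝ) + 1) / 2) ht (by positivity)
    (by linarith : -1 < s)).const_mul (gruetConst n t)
  refine (hI.congr_of_eventuallyEq ((lt_mem_nhds hs).mono fun s' hs' =>
    gruet_arcosh n t hs'.le)).congr_deriv ?_
  have hα : ((n + 2 : ℕ) + 1 : ℝ) / 2 = ((n : ℝ) + 1) / 2 + 1 := by push_cast; ring
  rw [gruet_arcosh (n + 2) t hs.le, hα]
  linear_combination
    (-gruetIntegral t (((n : ℝ) + 1) / 2 + 1) s) * gruetConst_mul_eq_gruetConst_add_two ht n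

/-- For fixed `t > 0`, `y, y' > 0` and `x'`, the map `x ↦ p₂(t, r(x))`, where
`r(x) = arcosh(((x-x')² + y² + y'²)/(2yy'))`, is differentiable at every `x ≠ x'`
with derivative `((x-x')/(yy')) · (-eᵗ 2π p₄(t, r(x)))`. -/
theorem hasDerivAt_gruet_two_dist (t y y' x' : ℝ) (ht : 0 < t) (hy : 0 < y) (hy' : 0 < y')
    (x : ℝ) (hx : x ≠ x') :
    HasDerivAt (fun ξ => gruet 2 t (_root_.arcosh (((ξ - x') ^ 2 + y ^ 2 + y' ^ 2) / (2 * y * y'))))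
      (((x - x') / (y * y')) *
        (-(Real.exp t) * (2 * π) *
          gruet 4 t (_root_.arcosh (((x - x') ^ 2 + y ^ 2 + y' ^ 2) / (2 * y * y'))))) x := by
  have hyy' : 0 < 2 * y * y' := by positivity
  have hcosh : 1 < ((x - x') ^ 2 + y ^ 2 + y' ^ 2) / (2 * y * y') := by
    rw [one_lt_div hyy']
    nlinarith [sq_pos_of_ne_zero (sub_ne_zero.2 hx), sq_nonneg (y - y')]
  have hquad : HasDerivAt (fun ξ => ((ξ - x') ^ 2 + y ^ 2 + y' ^ 2) / (2 * y * y'))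
      ((x - x') / (y * y')) x := by
    refine (((((hasDerivAt_id x).sub_const x').pow 2).add_const _).add_const _).div_const _
      |>.congr_deriv ?_
    rw [id]
    field_simp
    ring
  refine ((hasDerivAt_gruet_arcosh 2 ht hcosh).comp x hquad).congr_deriv ?_
  norm_num
  ring
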